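/- arXiv:1701.06690 — 8 statements merged into one kernel-verified Lean document; each statement's English description precedes it below -/
import Mathlib

section
/- For all integers m ≥ 3 and ℓ ≥ 1, one has (m² − 2m + ℓ + 2)·C(m+ℓ−1, ℓ) > (ℓ+1)·(m² + (ℓ−2)·m − (ℓ−2)). -/
/-!
Induction on `ℓ`. For `ℓ = 1` the difference of the two sides is `(m - 1)² (m - 2) > 0`.
Passing from `ℓ` to `ℓ + 1` multiplies `C(m+ℓ-1, ℓ)` by `(m + ℓ)/(ℓ + 1)`, raises the left
factor `m² - 2m + ℓ + 2` by one, and multiplies `(ℓ + 1) q(ℓ)`, with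
`q(ℓ) = m² + (ℓ - 2) m - (ℓ - 2)`, by at most the same ratio `(m + ℓ)/(ℓ + 1)`, because
`(m + ℓ) q(ℓ) - (ℓ + 2) q(ℓ + 1) = m (m - 2)² - 2 + ℓ (m - 1)(m - 3) ≥ 0` for `m ≥ 3`.
-/

theorem succ_mul_choose_add_sub_one (m ℓ : ℕ) :
    (ℓ + 1) * (m + (ℓ + 1) - 1).choose (ℓ + 1) = (m + ℓ) * (m + ℓ - 1).choose ℓ := by
  rcases m with _ | k
  · simpa using (Nat.eq_zero_or_pos ℓ).imp_right fun h => Nat.choose_eq_zero_of_lt (by omega)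
  · rw [show k + 1 + (ℓ + 1) - 1 = k + ℓ + 1 by omega, show k + 1 + ℓ - 1 = k + ℓ by omega,
      show k + 1 + ℓ = k + ℓ + 1 by omega, Nat.add_one_mul_choose_eq, mul_comm]

theorem add_two_mul_quadratic_succ_le (m ℓ : ℤ) (hm : 3 ≤ m) (hℓ : 0 ≤ ℓ) :
    (ℓ + 2) * (m ^ 2 + (ℓ - 1) * m - (ℓ - 1)) ≤ (m + ℓ) * (m ^ 2 + (ℓ - 2) * m - (ℓ - 2)) := by
  have hdiff : (m + ℓ) * (m ^ 2 + (ℓ - 2) * m - (ℓ - 2)) - (ℓ + 2) * (m ^ 2 + (ℓ - 1) * m - (ℓ - 1))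
      = m * (m - 2) ^ 2 - 2 + ℓ * ((m - 1) * (m - 3)) := by ring
  have hcubic : 2 ≤ m * (m - 2) ^ 2 := by nlinarith
  have hlin : 0 ≤ ℓ * ((m - 1) * (m - 3)) := mul_nonneg hℓ (mul_nonneg (by linarith) (by linarith))
  linarith

/-- **Lemma 3.5.** For all integers `m ≥ 3` and `ℓ ≥ 1`,
`(m² − 2m + ℓ + 2)·C(m+ℓ−1, ℓ) > (ℓ+1)·(m² + (ℓ−2)·m − (ℓ−2))`. -/
theorem stmt_0 (m ℓ : ℕ) (hm : 3 ≤ m) (hℓ : 1 ≤ ℓ) :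
    ((m : ℤ) ^ 2 - 2 * (m : ℤ) + (ℓ : ℤ) + 2) * (Nat.choose (m + ℓ - 1) ℓ : ℤ) >
      ((ℓ : ℤ) + 1) * ((m : ℤ) ^ 2 + ((ℓ : ℤ) - 2) * (m : ℤ) - ((ℓ : ℤ) - 2)) := by
  have hM : (3 : ℤ) ≤ m := by exact_mod_cast hm
  induction ℓ, hℓ using Nat.le_induction with
  | base =>
    rw [show m + 1 - 1 = m by omega, Nat.choose_one_right]
    push_cast
    have hcubic : 0 < ((m : ℤ) - 1) ^ 2 * ((m : ℤ) - 2) :=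
      mul_pos (pow_pos (by linarith) 2) (by linarith)
    linear_combination hcubic
  | succ ℓ hℓ ih =>
    have hrec : ((ℓ : ℤ) + 1) * ((m + (ℓ + 1) - 1).choose (ℓ + 1) : ℕ) =
        ((m : ℤ) + ℓ) * ((m + ℓ - 1).choose ℓ : ℕ) := by
      exact_mod_cast succ_mul_choose_add_sub_one m ℓ
    set C : ℤ := (((m + ℓ - 1).choose ℓ : ℕ) : ℤ)
    have hquad := add_two_mul_quadratic_succ_le m ℓ hM (by positivity)
    rw [gt_iff_lt, ← mul_lt_mul_iff_right₀ (by positivity : (0 : ℤ) < ℓ + 1)]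
    push_cast
    calc ((ℓ : ℤ) + 1) * ((ℓ + 1 + 1) * (m ^ 2 + (ℓ + 1 - 2) * m - (ℓ + 1 - 2)))
        ≤ (ℓ + 1) * ((m + ℓ) * (m ^ 2 + (ℓ - 2) * m - (ℓ - 2))) :=
          mul_le_mul_of_nonneg_left (by linear_combination hquad) (by positivity)
      _ < (m + ℓ) * ((m ^ 2 - 2 * m + ℓ + 2) * C) := by
          rw [mul_left_comm]
          gcongr
      _ ≤ (m ^ 2 - 2 * m + (ℓ + 1) + 2) * ((m + ℓ) * C) := by
          linear_combination mul_nonneg (by positivity : (0 : ℤ) ≤ m + ℓ) (by positivity : 0 ≤ C)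
      _ = _ := by rw [← hrec]; ring
end

section
/- For all integers m ≥ 3 and ℓ ≥ 1, one has C(m+ℓ, ℓ+1)·(m+ℓ) > m·(m+ℓ) + (2m+ℓ−2)·(C(m+ℓ−1, ℓ) − 1). -/
/-!
Write `B = C(m+ℓ-1, ℓ)`. Pascal's rule gives `(ℓ+1)·C(m+ℓ, ℓ+1) = (m+ℓ)·B`, so after multiplying
by `ℓ+1` the inequality becomes `(ℓ+1)(m² + (ℓ-2)m - (ℓ-2)) < (m² - 2m + ℓ + 2)·B`, linear in `B`.
The bound `(m-1)ℓ + 1 ≤ B`, itself Pascal's rule by induction, closes it: at `B = (m-1)ℓ + 1`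
the two sides differ by exactly `ℓ(m-1)²(m-2)`.
-/

theorem Nat.mul_add_one_le_add_choose (a b : ℕ) : a * b + 1 ≤ (a + b).choose b := by
  induction a generalizing b with
  | zero => simp
  | succ a iha =>
    induction b with
    | zero => simp
    | succ b ihb =>
      have hright := iha (b + 1)
      rw [show a + (b + 1) = a + 1 + b by ring] at hright
      rw [show a + 1 + (b + 1) = a + 1 + b + 1 by ring, Nat.choose_succ_succ]
      nlinarith

theorem add_one_mul_lt_mul_of_sub_one_mul_add_one_le (m ℓ B : ℤ) (hm : 3 ≤ m) (hℓ : 1 ≤ ℓ)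
    (hB : (m - 1) * ℓ + 1 ≤ B) :
    (ℓ + 1) * (m ^ 2 + (ℓ - 2) * m - (ℓ - 2)) < (m ^ 2 - 2 * m + ℓ + 2) * B := by
  have hgap : 0 < ℓ * (m - 1) ^ 2 * (m - 2) :=
    mul_pos (mul_pos (by omega) (by nlinarith)) (by omega)
  calc (ℓ + 1) * (m ^ 2 + (ℓ - 2) * m - (ℓ - 2))
      < (m ^ 2 - 2 * m + ℓ + 2) * ((m - 1) * ℓ + 1) := by linear_combination hgap
    _ ≤ (m ^ 2 - 2 * m + ℓ + 2) * B := by gcongr; nlinarith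

/-- **Arithmetic core of Theorem 3.2.** For all integers `m ≥ 3` and `ℓ ≥ 1`,
`C(m+ℓ, ℓ+1)·(m+ℓ) > m·(m+ℓ) + (2m+ℓ−2)·(C(m+ℓ−1, ℓ) − 1)`. -/
theorem stmt_1 (m ℓ : ℕ) (hm : 3 ≤ m) (hℓ : 1 ≤ ℓ) :
    (Nat.choose (m + ℓ) (ℓ + 1) : ℤ) * ((m : ℤ) + (ℓ : ℤ)) >
      (m : ℤ) * ((m : ℤ) + (ℓ : ℤ)) +
        (2 * (m : ℤ) + (ℓ : ℤ) - 2) * ((Nat.choose (m + ℓ - 1) ℓ : ℤ) - 1) := by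
  have hpascal : (m + ℓ) * (m + ℓ - 1).choose ℓ = (m + ℓ).choose (ℓ + 1) * (ℓ + 1) := by
    simpa [show m + ℓ - 1 + 1 = m + ℓ by omega] using Nat.add_one_mul_choose_eq (m + ℓ - 1) ℓ
  have hlower : (m - 1) * ℓ + 1 ≤ (m + ℓ - 1).choose ℓ := by
    simpa [show m - 1 + ℓ = m + ℓ - 1 by omega] using Nat.mul_add_one_le_add_choose (m - 1) ℓ
  zify [show 1 ≤ m by omega] at hlower hpascal
  have hcore := add_one_mul_lt_mul_of_sub_one_mul_add_one_le m ℓ _ (by exact_mod_cast hm)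
    (by exact_mod_cast hℓ) hlower
  rw [gt_iff_lt, ← mul_lt_mul_iff_left₀ (by positivity : (0 : ℤ) < ℓ + 1)]
  linear_combination hcore + ((m : ℤ) + ℓ) * hpascal
end

section
/- For every integer ℓ ≥ 0, the ideal M·Qℓ of R is minimally generated by C(m+ℓ, ℓ+1)·n elements; that is, μ_R(M·Q^ℓ) = C(m+ℓ, ℓ+1)·n. -/
set_option synthInstance.maxHeartbeats 1000000

noncomputable section

open MvPolynomial

/-- The minimal number of generators of an ideal `I`, i.e. the least cardinality of a
finite generating set of `I`. -/
def idealMu {A : Type*} [CommRing A] (I : Ideal A) : ℕ :=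
  sInf {c : ℕ | ∃ s : Finset A, s.card = c ∧ Ideal.span (s : Set A) = I}

variable (k : Type*) [Field k] (m n : ℕ)

/-- The ideal `I₂(X)` of `2 × 2` minors of the generic `m × n` matrix
`X = (X_{ij})` in the polynomial ring `S = k[X_{ij}]`. -/
def detIdeal : Ideal (MvPolynomial (Fin m × Fin n) k) :=
  Ideal.span {f | ∃ (i₁ i₂ : Fin m) (j₁ j₂ : Fin n), i₁ < i₂ ∧ j₁ < j₂ ∧
    f = X (i₁, j₁) * X (i₂, j₂) - X (i₁, j₂) * X (i₂, j₁)}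

/-- The determinantal ring `R = S/I₂(X)`. -/
abbrev DetRing := MvPolynomial (Fin m × Fin n) k ⧸ detIdeal k m n

/-- `x_{ij}`, the image of `X_{ij}` in `R`. -/
def xbar (i : Fin m) (j : Fin n) : DetRing k m n :=
  Ideal.Quotient.mk _ (X (i, j))

/-- The graded maximal ideal `M = R₊`, generated by all the `x_{ij}`. -/
def maxIdeal : Ideal (DetRing k m n) :=
  Ideal.span (Set.range fun p : Fin m × Fin n => xbar k m n p.1 p.2)

/-- The ideal `Q = (x_{11}, x_{21}, …, x_{m1})` generated by the entries of the
first column of `X`. -/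
def colIdeal : Ideal (DetRing k m n) :=
  Ideal.span {y | ∃ (i : Fin m) (j : Fin n), (j : ℕ) = 0 ∧ y = xbar k m n i j}

/-!
Sending `x_{ij} ↦ u_i v_j` maps `R` to `k[u, v]`. Modulo the `2 × 2` minors, the generator
`x_{ij} x_{a₁1} ⋯ x_{aℓ1}` of `M·Q^ℓ` depends only on the multiset `{i, a₁, …, aℓ}` and on `j`,
which leaves at most `C(m+ℓ, ℓ+1)·n` generators. Their images are the distinct monomials
`u_i u_{a₁} ⋯ u_{aℓ} v_j v_1^ℓ` of the same degree `2ℓ + 2`; since everything in `M·Q^ℓ` maps into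
degrees `≥ 2ℓ + 2`, reading off the coefficients of these monomials is linear over `R` acting
through its constant term, and sends any generating set onto a spanning set of `k^(C(m+ℓ, ℓ+1)·n)`.
-/
theorem Finsupp.eq_of_le_of_degree_eq {σ : Type*} {d e : σ →₀ ℕ} (hle : d ≤ e)
    (hdeg : d.degree = e.degree) : d = e := by
  by_contra hne
  exact (Finsupp.sum_id_lt_of_lt d e (lt_of_le_of_ne hle hne)).ne hdeg

theorem Multiset.disjSum_inj {α β : Type*} {s₁ s₂ : Multiset α} {t₁ t₂ : Multiset β} :
    s₁.disjSum t₁ = s₂.disjSum t₂ ↔ s₁ = s₂ ∧ t₁ = t₂ := by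
  classical
  refine ⟨fun h => ⟨Multiset.ext.mpr fun a => ?_, Multiset.ext.mpr fun b => ?_⟩,
    fun h => h.1 ▸ h.2 ▸ rfl⟩
  · simpa [Multiset.disjSum, Multiset.count_map_eq_count' _ _ Sum.inl_injective]
      using congrArg (Multiset.count (Sum.inl a)) h
  · simpa [Multiset.disjSum, Multiset.count_map_eq_count' _ _ Sum.inr_injective]
      using congrArg (Multiset.count (Sum.inr b)) h

theorem Multiset.degree_toFinsupp {α : Type*} [DecidableEq α] (s : Multiset α) :
    (Multiset.toFinsupp s).degree = Multiset.card s := by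
  rw [← Multiset.toFinsupp_sum_eq]
  rfl

namespace MvPolynomial

variable {R σ : Type*} [CommSemiring R]

theorem prod_map_X [DecidableEq σ] (s : Multiset σ) :
    (s.map X).prod = monomial (Multiset.toFinsupp s) (1 : R) := by
  induction s using Multiset.induction_on with
  | empty => simp
  | cons a s ih =>
    rw [Multiset.map_cons, Multiset.prod_cons, ih, ← Multiset.singleton_add,
      Multiset.toFinsupp_add, Multiset.toFinsupp_singleton, monomial_single_add, pow_one]

theorem coeff_mul_monomial_of_degree_eq [DecidableEq σ] (p : MvPolynomial σ R) {d e : σ →₀ ℕ}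
    (hdeg : d.degree = e.degree) :
    coeff e (p * monomial d 1) = if d = e then constantCoeff p else 0 := by
  rw [coeff_mul_monomial']
  split_ifs with hle hde hde
  · rw [hde, tsub_self, mul_one, constantCoeff_eq]
  · exact absurd (Finsupp.eq_of_le_of_degree_eq hle hdeg) hde
  · exact absurd hde.le hle
  · rfl

end MvPolynomial

theorem idealMu_le_card {A : Type*} [CommRing A] (s : Finset A) :
    idealMu (Ideal.span (s : Set A)) ≤ s.card :=
  Nat.sInf_le ⟨s, rfl, rfl⟩

theorem idealMu_bot {A : Type*} [CommRing A] : idealMu (⊥ : Ideal A) = 0 := by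
  simpa using idealMu_le_card (∅ : Finset A)

section MonomialImages

variable {A K σ ι : Type*} [CommRing A] [Field K] [Fintype ι]
  (ψ : A →+* MvPolynomial σ K) (g : ι → A) {d : ι → σ →₀ ℕ} (D : ℕ)

theorem card_le_card_of_span_eq_span_range_monomial (hd : Function.Injective d)
    (hdeg : ∀ i, (d i).degree = D) (hψ : ∀ i, ψ (g i) = monomial (d i) 1)
    (s : Finset A) (hs : Ideal.span (s : Set A) = Ideal.span (Set.range g)) :
    Fintype.card ι ≤ s.card := by
  classical
  let ε : A →+* K := constantCoeff.comp ψ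
  let Φ : A → ι → K := fun r i => coeff (d i) (ψ r)
  have hΦ_zero : Φ 0 = 0 := by
    funext i; simp only [Φ, map_zero, coeff_zero, Pi.zero_apply]
  have hΦ_add (x y : A) : Φ (x + y) = Φ x + Φ y := by
    funext i; simp only [Φ, map_add, coeff_add, Pi.add_apply]
  -- All `d i` have degree `D`, so the coefficient of `ψ r * monomial (d j) 1` at `d i` only sees
  -- the constant term of `ψ r`.
  have hΦ_gen (r : A) (j : ι) : Φ (r * g j) = ε r • Pi.single j 1 := by
    funext i
    simp only [Φ, ε, RingHom.comp_apply, map_mul, hψ,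
      coeff_mul_monomial_of_degree_eq _ ((hdeg j).trans (hdeg i).symm), hd.eq_iff,
      Pi.smul_apply, Pi.single_apply, smul_eq_mul, mul_ite, mul_one, mul_zero, eq_comm]
  have hΦ_mul : ∀ t ∈ Ideal.span (Set.range g), ∀ r, Φ (r * t) = ε r • Φ t := by
    intro t ht
    induction ht using Submodule.span_induction with
    | mem x hx =>
      obtain ⟨j, rfl⟩ := hx
      intro r
      rw [hΦ_gen, ← one_mul (g j), hΦ_gen, map_one, one_smul]
    | zero => intro r; rw [mul_zero, hΦ_zero, smul_zero]
    | add x y _ _ hx hy => intro r; rw [mul_add, hΦ_add, hΦ_add, hx, hy, smul_add]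
    | smul a x _ hx => intro r; rw [smul_eq_mul, ← mul_assoc, hx, hx, map_mul, mul_smul]
  have hΦ_span : ∀ t ∈ Ideal.span (s : Set A), Φ t ∈ Submodule.span K (Φ '' s) := by
    intro t ht
    induction ht using Submodule.span_induction with
    | mem x hx => exact Submodule.subset_span ⟨x, hx, rfl⟩
    | zero => rw [hΦ_zero]; exact Submodule.zero_mem _
    | add x y _ _ hx hy => rw [hΦ_add]; exact Submodule.add_mem _ hx hy
    | smul a x hxs hx =>
      rw [smul_eq_mul, hΦ_mul x (hs ▸ hxs)]
      exact Submodule.smul_mem _ _ hx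
  have htop : Submodule.span K (Φ '' s) = ⊤ := by
    refine eq_top_iff.mpr ((Pi.basisFun K ι).span_eq ▸ Submodule.span_le.mpr ?_)
    rintro _ ⟨j, rfl⟩
    have := hΦ_span (g j) (hs ▸ Ideal.subset_span ⟨j, rfl⟩)
    rwa [← one_mul (g j), hΦ_gen, map_one, one_smul] at this
  calc Fintype.card ι = Module.finrank K (ι → K) := (Module.finrank_fintype_fun_eq_card K).symm
    _ = Set.finrank K (Φ '' s) := by rw [Set.finrank, htop, finrank_top]
    _ ≤ (s.image Φ).card := by rw [← Finset.coe_image]; exact finrank_span_finset_le_card _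
    _ ≤ s.card := Finset.card_image_le

theorem idealMu_span_range_eq_card (hd : Function.Injective d)
    (hdeg : ∀ i, (d i).degree = D) (hψ : ∀ i, ψ (g i) = monomial (d i) 1) :
    idealMu (Ideal.span (Set.range g)) = Fintype.card ι := by
  classical
  have hspan : Ideal.span ((Finset.univ.image g : Finset A) : Set A) =
      Ideal.span (Set.range g) := by
    simp
  refine le_antisymm (hspan ▸ (idealMu_le_card _).trans Finset.card_image_le) ?_
  refine le_csInf ⟨_, _, rfl, hspan⟩ ?_
  rintro _ ⟨s, rfl, hs⟩
  exact card_le_card_of_span_eq_span_range_monomial ψ g D hd hdeg hψ s hs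

end MonomialImages

def segreMap : MvPolynomial (Fin m × Fin n) k →ₐ[k] MvPolynomial (Fin m ⊕ Fin n) k :=
  aeval fun p => X (Sum.inl p.1) * X (Sum.inr p.2)

theorem detIdeal_le_ker_segreMap : detIdeal k m n ≤ RingHom.ker (segreMap k m n) := by
  refine Ideal.span_le.mpr ?_
  rintro _ ⟨i₁, i₂, j₁, j₂, -, -, rfl⟩
  simp only [SetLike.mem_coe, RingHom.mem_ker, map_sub, map_mul, segreMap, aeval_X]
  ring

def segreHom : DetRing k m n →+* MvPolynomial (Fin m ⊕ Fin n) k :=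
  Ideal.Quotient.lift _ (segreMap k m n) fun _ ha => detIdeal_le_ker_segreMap k m n ha

theorem segreHom_xbar (i : Fin m) (j : Fin n) :
    segreHom k m n (xbar k m n i j) = X (Sum.inl i) * X (Sum.inr j) := by
  simp [segreHom, segreMap, xbar]

theorem xbar_mul_xbar_comm (i i' : Fin m) (j j' : Fin n) :
    xbar k m n i j * xbar k m n i' j' = xbar k m n i j' * xbar k m n i' j := by
  wlog hi : i < i' generalizing i i'
  · rcases (not_lt.mp hi).eq_or_lt with rfl | hi'
    · ring
    · linear_combination -this i' i hi'
  wlog hj : j < j' generalizing j j'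
  · rcases (not_lt.mp hj).eq_or_lt with rfl | hj'
    · ring
    · linear_combination -this j' j hj'
  have hminor : X (i, j) * X (i', j') - X (i, j') * X (i', j) ∈ detIdeal k m n :=
    Ideal.subset_span ⟨i, i', j, j', hi, hj, rfl⟩
  rw [← Ideal.Quotient.eq_zero_iff_mem, map_sub, map_mul, map_mul, sub_eq_zero] at hminor
  exact hminor

def colProd (j₀ : Fin n) (s : Multiset (Fin m)) : DetRing k m n :=
  (s.map fun c => xbar k m n c j₀).prod

theorem colProd_cons (j₀ : Fin n) (c : Fin m) (s : Multiset (Fin m)) :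
    colProd k m n j₀ (c ::ₘ s) = xbar k m n c j₀ * colProd k m n j₀ s := by
  simp [colProd]

theorem xbar_mul_colProd_eq_of_cons_eq (j₀ j : Fin n) {i i' : Fin m} {s s' : Multiset (Fin m)}
    (h : i ::ₘ s = i' ::ₘ s') :
    xbar k m n i j * colProd k m n j₀ s = xbar k m n i' j * colProd k m n j₀ s' := by
  obtain ⟨rfl, rfl⟩ | ⟨-, t, rfl, rfl⟩ := Multiset.cons_eq_cons.mp h
  · rfl
  · rw [colProd_cons, colProd_cons]
    linear_combination colProd k m n j₀ t * xbar_mul_xbar_comm k m n i i' j j₀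

def colGen (j₀ : Fin n) (ℓ : ℕ) (p : (Fin m × Fin n) × Sym (Fin m) ℓ) : DetRing k m n :=
  xbar k m n p.1.1 p.1.2 * colProd k m n j₀ p.2

def consSym (ℓ : ℕ) (p : (Fin m × Fin n) × Sym (Fin m) ℓ) : Sym (Fin m) (ℓ + 1) × Fin n :=
  (p.1.1 ::ₛ p.2, p.1.2)

theorem consSym_surjective (ℓ : ℕ) : Function.Surjective (consSym m n ℓ) := by
  rintro ⟨σ, j⟩
  obtain ⟨i, s, rfl⟩ := Sym.exists_eq_cons_of_succ σ
  exact ⟨((i, j), s), rfl⟩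

theorem colGen_factorsThrough (j₀ : Fin n) (ℓ : ℕ) :
    (colGen k m n j₀ ℓ).FactorsThrough (consSym m n ℓ) := by
  rintro ⟨⟨i, j⟩, s⟩ ⟨⟨i', j'⟩, s'⟩ h
  obtain ⟨hσ, rfl⟩ := Prod.ext_iff.mp h
  exact xbar_mul_colProd_eq_of_cons_eq k m n j₀ j (congrArg Subtype.val hσ)

theorem maxIdeal_mul_span_pow (j₀ : Fin n) (ℓ : ℕ) :
    maxIdeal k m n * Ideal.span (Set.range fun c => xbar k m n c j₀) ^ ℓ =
      Ideal.span (Set.range (colGen k m n j₀ ℓ)) := by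
  induction ℓ with
  | zero =>
    rw [Submodule.pow_zero, Ideal.one_eq_top, Ideal.mul_top, maxIdeal,
      ← (Prod.fst_surjective (β := Sym (Fin m) 0)).range_comp]
    congr 2
    funext p
    simp [colGen, colProd, Sym.eq_nil_of_card_zero p.2]
  | succ ℓ ih =>
    have hcons : (fun q : ((Fin m × Fin n) × Sym (Fin m) ℓ) × Fin m =>
        colGen k m n j₀ ℓ q.1 * xbar k m n q.2 j₀) =
        colGen k m n j₀ (ℓ + 1) ∘ fun q => (q.1.1, q.2 ::ₛ q.1.2) := by
      funext q
      simp only [colGen, Function.comp_apply, Sym.coe_cons, colProd_cons]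
      ring
    have hsurj : Function.Surjective fun q : ((Fin m × Fin n) × Sym (Fin m) ℓ) × Fin m =>
        (q.1.1, q.2 ::ₛ q.1.2) := by
      rintro ⟨ij, σ⟩
      obtain ⟨c, s, rfl⟩ := Sym.exists_eq_cons_of_succ σ
      exact ⟨((ij, s), c), rfl⟩
    rw [Submodule.pow_succ, ← mul_assoc, ih, Ideal.span_mul_span', ← Set.image2_mul,
      Set.image2_range, hcons, hsurj.range_comp]

def colExponent (j₀ : Fin n) (ℓ : ℕ) (p : Sym (Fin m) (ℓ + 1) × Fin n) :
    Multiset (Fin m ⊕ Fin n) :=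
  (p.1 : Multiset (Fin m)).disjSum (p.2 ::ₘ Multiset.replicate ℓ j₀)

theorem colExponent_injective (j₀ : Fin n) (ℓ : ℕ) :
    Function.Injective (colExponent m n j₀ ℓ) := by
  rintro ⟨σ, j⟩ ⟨σ', j'⟩ h
  obtain ⟨hσ, hj⟩ := Multiset.disjSum_inj.mp h
  exact Prod.ext (Sym.coe_injective hσ) ((Multiset.cons_inj_left _).mp hj)

theorem card_colExponent (j₀ : Fin n) (ℓ : ℕ) (p : Sym (Fin m) (ℓ + 1) × Fin n) :
    Multiset.card (colExponent m n j₀ ℓ p) = 2 * ℓ + 2 := by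
  simp [colExponent, Multiset.card_disjSum]
  ring

theorem segreHom_colGen (j₀ : Fin n) (ℓ : ℕ) (p : (Fin m × Fin n) × Sym (Fin m) ℓ) :
    segreHom k m n (colGen k m n j₀ ℓ p) =
      monomial (Multiset.toFinsupp (colExponent m n j₀ ℓ (consSym m n ℓ p))) 1 := by
  rw [← prod_map_X]
  obtain ⟨⟨i, j⟩, s⟩ := p
  simp [colGen, colProd, colExponent, consSym, segreHom_xbar, Sym.coe_cons, map_multiset_prod,
    Multiset.map_disjSum, Multiset.prod_map_mul]
  ring

theorem idealMu_maxIdeal_mul_span_pow (j₀ : Fin n) (ℓ : ℕ) :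
    idealMu (maxIdeal k m n * Ideal.span (Set.range fun c => xbar k m n c j₀) ^ ℓ) =
      (m + ℓ).choose (ℓ + 1) * n := by
  classical
  have hF := colGen_factorsThrough k m n j₀ ℓ
  -- `Function.extend` descends `colGen` to a family indexed by `Sym (Fin m) (ℓ + 1) × Fin n`.
  rw [maxIdeal_mul_span_pow, ← hF.extend_comp (fun _ => 0), (consSym_surjective m n ℓ).range_comp,
    idealMu_span_range_eq_card (segreHom k m n) _ (2 * ℓ + 2)
      (Multiset.toFinsupp.injective.comp (colExponent_injective m n j₀ ℓ)) (fun p => ?_)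
      (fun p => ?_),
    Fintype.card_prod, Sym.card_sym_eq_choose, Fintype.card_fin, Fintype.card_fin,
    Nat.add_succ_sub_one]
  · rw [Function.comp_apply, Multiset.degree_toFinsupp, card_colExponent]
  · obtain ⟨q, rfl⟩ := consSym_surjective m n ℓ p
    rw [hF.extend_apply, segreHom_colGen]
    rfl

theorem colIdeal_eq_span_range (j₀ : Fin n) (hj₀ : (j₀ : ℕ) = 0) :
    colIdeal k m n = Ideal.span (Set.range fun c => xbar k m n c j₀) := by
  rw [colIdeal]
  congr 1
  ext y
  constructor
  · rintro ⟨i, j, hj, rfl⟩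
    exact ⟨i, by rw [Fin.ext (hj₀.trans hj.symm)]⟩
  · rintro ⟨i, rfl⟩
    exact ⟨i, j₀, hj₀, rfl⟩

theorem stmt_2 (ℓ : ℕ) :
    idealMu (maxIdeal k m n * colIdeal k m n ^ ℓ) = Nat.choose (m + ℓ) (ℓ + 1) * n := by
  rcases Nat.eq_zero_or_pos n with rfl | hn
  · rw [maxIdeal, Set.range_eq_empty, Ideal.span_empty, Submodule.bot_mul, idealMu_bot, mul_zero]
  · rw [colIdeal_eq_span_range k m n ⟨0, hn⟩ rfl]
    exact idealMu_maxIdeal_mul_span_pow k m n ⟨0, hn⟩ ℓ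
end
end

section
/- Let t ≥ 3, ℓ ≥ 1 and s ≥ 0 be integers, and set α = ([∏_{j=0}^{ℓ−1} ∏_{i=1}^{s} (t+i+j)] · [∏_{i=0}^{ℓ−2} (t+i)] · [∏_{i=1}^{s} i!]) / ((ℓ−1)! · ∏_{i=ℓ+1}^{s+ℓ} i!) ∈ ℚ. Then α·((s+1)²(t−1) + (t+ℓ−1)) > ℓ·((s+1)(s+ℓ+1) + 1). -/
open Finset

private lemma fac_shift (i l : ℕ) :
    i.factorial * ∏ j ∈ range l, (i + j + 1) = (i + l).factorial := by
  induction l with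
  | zero => simp
  | succ n ih =>
      rw [prod_range_succ, ← mul_assoc, ih, show i + (n+1) = (i+n)+1 from rfl,
        Nat.factorial_succ]
      ring

private lemma two_mul_prod (n : ℕ) :
    2 * ∏ i ∈ range n, (i + 3) = (n + 2).factorial := by
  induction n with
  | zero => simp [Nat.factorial]
  | succ n ih =>
      rw [prod_range_succ, ← mul_assoc, ih, show n + 1 + 2 = (n+2)+1 from rfl,
        Nat.factorial_succ, show n + 3 = (n+2)+1 from rfl]
      exact Nat.mul_comm _ _

private lemma key (t l s : ℕ) (ht : 3 ≤ t) (hl : 1 ≤ l) :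
    l * (l+1) * ((l-1).factorial * ∏ i ∈ Icc (l+1) (s+l), i.factorial)
      ≤ 2 * ((∏ j ∈ range l, ∏ i ∈ Icc 1 s, (t + i + j)) *
        (∏ i ∈ range (l-1), (t + i)) * ∏ i ∈ Icc 1 s, i.factorial) := by
  have hre : ∏ i ∈ Icc (l+1) (s+l), i.factorial = ∏ i ∈ Icc 1 s, (i + l).factorial := by
    rw [show l + 1 = 1 + l by ring, ← Finset.map_add_right_Icc, Finset.prod_map]
    rfl
  have hsplit : ∏ i ∈ Icc 1 s, (i + l).factorial
      = (∏ i ∈ Icc 1 s, i.factorial) * ∏ i ∈ Icc 1 s, ∏ j ∈ range l, (i + j + 1) := by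
    rw [← prod_mul_distrib]
    exact prod_congr rfl fun i _ => (fac_shift i l).symm
  have hb : l * (l+1) * (l-1).factorial ≤ 2 * ∏ i ∈ range (l-1), (t + i) := by
    have h1 : l * (l+1) * (l-1).factorial = (l - 1 + 2).factorial := by
      rw [show l - 1 + 2 = (l - 1 + 1) + 1 from rfl, Nat.factorial_succ, Nat.factorial_succ,
        Nat.sub_add_cancel hl]
      ring
    rw [h1, ← two_mul_prod]
    refine Nat.mul_le_mul_left 2 (Finset.prod_le_prod' fun i _ => by omega)
  have ha : ∏ i ∈ Icc 1 s, ∏ j ∈ range l, (i + j + 1)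
      ≤ ∏ j ∈ range l, ∏ i ∈ Icc 1 s, (t + i + j) := by
    rw [Finset.prod_comm]
    exact Finset.prod_le_prod' fun j _ => Finset.prod_le_prod' fun i _ => by omega
  calc l * (l+1) * ((l-1).factorial * ∏ i ∈ Icc (l+1) (s+l), i.factorial)
      = (l * (l+1) * (l-1).factorial) *
        ((∏ i ∈ Icc 1 s, ∏ j ∈ range l, (i + j + 1)) * ∏ i ∈ Icc 1 s, i.factorial) := by
        rw [hre, hsplit]; ring
    _ ≤ (2 * ∏ i ∈ range (l-1), (t + i)) *
        ((∏ j ∈ range l, ∏ i ∈ Icc 1 s, (t + i + j)) * ∏ i ∈ Icc 1 s, i.factorial) :=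
        Nat.mul_le_mul hb (Nat.mul_le_mul_right _ ha)
    _ = 2 * ((∏ j ∈ range l, ∏ i ∈ Icc 1 s, (t + i + j)) *
        (∏ i ∈ range (l-1), (t + i)) * ∏ i ∈ Icc 1 s, i.factorial) := by ring

/-- **Arithmetic heart of the main theorem.** Let `t ≥ 3`, `ℓ ≥ 1`, `s ≥ 0` and
`α = (∏_{j=0}^{ℓ−1} ∏_{i=1}^{s} (t+i+j) · ∏_{i=0}^{ℓ−2} (t+i) · ∏_{i=1}^{s} i!) /
((ℓ−1)! · ∏_{i=ℓ+1}^{s+ℓ} i!) ∈ ℚ`.  Then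
`α·((s+1)²(t−1) + (t+ℓ−1)) > ℓ·((s+1)(s+ℓ+1) + 1)`. -/
theorem stmt_11 (t ℓ s : ℕ) (ht : 3 ≤ t) (hℓ : 1 ≤ ℓ)
    (α : ℚ)
    (hα : α = ((∏ j ∈ Finset.range ℓ, ∏ i ∈ Finset.Icc 1 s, ((t + i + j : ℕ) : ℚ)) *
        (∏ i ∈ Finset.range (ℓ - 1), ((t + i : ℕ) : ℚ)) *
        (∏ i ∈ Finset.Icc 1 s, (Nat.factorial i : ℚ))) /
      ((Nat.factorial (ℓ - 1) : ℚ) *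
        ∏ i ∈ Finset.Icc (ℓ + 1) (s + ℓ), (Nat.factorial i : ℚ))) :
    α * (((s : ℚ) + 1) ^ 2 * ((t : ℚ) - 1) + ((t : ℚ) + (ℓ : ℚ) - 1)) >
      (ℓ : ℚ) * (((s : ℚ) + 1) * ((s : ℚ) + (ℓ : ℚ) + 1) + 1) := by
  have hD : (0:ℚ) < ((Nat.factorial (ℓ - 1) : ℚ) *
      ∏ i ∈ Finset.Icc (ℓ + 1) (s + ℓ), (Nat.factorial i : ℚ)) := by
    apply mul_pos
    · exact_mod_cast Nat.factorial_pos _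
    · exact Finset.prod_pos fun i _ => by exact_mod_cast Nat.factorial_pos _
  have hkey := key t ℓ s ht hℓ
  have hkeyQ : (ℓ:ℚ) * ((ℓ:ℚ)+1) * ((Nat.factorial (ℓ - 1) : ℚ) *
      ∏ i ∈ Finset.Icc (ℓ + 1) (s + ℓ), (Nat.factorial i : ℚ))
      ≤ 2 * ((∏ j ∈ Finset.range ℓ, ∏ i ∈ Finset.Icc 1 s, ((t + i + j : ℕ) : ℚ)) *
        (∏ i ∈ Finset.range (ℓ - 1), ((t + i : ℕ) : ℚ)) *
        (∏ i ∈ Finset.Icc 1 s, (Nat.factorial i : ℚ))) := by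
    exact_mod_cast hkey
  have hα' : (ℓ:ℚ) * ((ℓ:ℚ)+1) / 2 ≤ α := by
    rw [hα, le_div_iff₀ hD]
    linarith
  have hl1 : (1:ℚ) ≤ (ℓ:ℚ) := by exact_mod_cast hℓ
  have ht3 : (3:ℚ) ≤ (t:ℚ) := by exact_mod_cast ht
  have hs0 : (0:ℚ) ≤ (s:ℚ) := Nat.cast_nonneg s
  have hA : (2:ℚ)*((s:ℚ)+1)^2 + ((ℓ:ℚ)+2)
      ≤ ((s : ℚ) + 1) ^ 2 * ((t : ℚ) - 1) + ((t : ℚ) + (ℓ : ℚ) - 1) := by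
    nlinarith [sq_nonneg ((s:ℚ)+1)]
  have hApos : (0:ℚ) < (2:ℚ)*((s:ℚ)+1)^2 + ((ℓ:ℚ)+2) := by positivity
  have hc0 : (0:ℚ) ≤ (ℓ:ℚ) * ((ℓ:ℚ)+1) / 2 := by positivity
  have hmul : ((ℓ:ℚ) * ((ℓ:ℚ)+1) / 2) * ((2:ℚ)*((s:ℚ)+1)^2 + ((ℓ:ℚ)+2))
      ≤ α * (((s : ℚ) + 1) ^ 2 * ((t : ℚ) - 1) + ((t : ℚ) + (ℓ : ℚ) - 1)) :=
    mul_le_mul hα' hA hApos.le (le_trans hc0 hα')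
  nlinarith [mul_nonneg hs0 hs0, mul_nonneg (mul_nonneg hs0 hs0) (sub_nonneg.2 hl1),
    mul_nonneg hs0 (sub_nonneg.2 hl1)]
end

section
/- For all integers s ≥ 0 and ℓ ≥ 1, one has (s+ℓ+2)·(s+2)·[∏_{i=3}^{ℓ+1} (s+i)²]·(2(s+1)² + ℓ + 2) > ℓ!·(ℓ+2)!·((s+1)(s+ℓ+1) + 1). -/
/-- Key ratio inequality for the induction step. -/
lemma stmt_12_key (s ℓ : ℕ) :
    (ℓ+1)*(ℓ+3)*((s+1)*(s+ℓ+2)+1)*(2*(s+1)^2+ℓ+2) ≤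
      ((s+1)*(s+ℓ+1)+1)*(s+ℓ+3)*(s+ℓ+2)*(2*(s+1)^2+ℓ+3) := by
  nlinarith [sq_nonneg (s+1), sq_nonneg s, sq_nonneg ℓ, sq_nonneg (s*ℓ), sq_nonneg (s+ℓ),
    Nat.zero_le (s*ℓ), sq_nonneg (s*s), mul_le_mul_left (Nat.zero_le s) ℓ]

/-- **Final step of the main theorem.** For all integers `s ≥ 0` and `ℓ ≥ 1`,
`(s+ℓ+2)·(s+2)·∏_{i=3}^{ℓ+1}(s+i)²·(2(s+1)²+ℓ+2) > ℓ!·(ℓ+2)!·((s+1)(s+ℓ+1)+1)`. -/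
theorem stmt_12 (s ℓ : ℕ) (hℓ : 1 ≤ ℓ) :
    (s + ℓ + 2) * (s + 2) * (∏ i ∈ Finset.Icc 3 (ℓ + 1), (s + i) ^ 2) *
        (2 * (s + 1) ^ 2 + ℓ + 2) >
      Nat.factorial ℓ * Nat.factorial (ℓ + 2) * ((s + 1) * (s + ℓ + 1) + 1) := by
  induction ℓ, hℓ using Nat.le_induction with
  | base =>
      simp [Finset.Icc_self, Nat.factorial]
      nlinarith [sq_nonneg (s+1)]
  | succ ℓ hℓ ih =>
      have hsplit : (∏ i ∈ Finset.Icc 3 (ℓ + 1 + 1), (s + i) ^ 2)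
          = (∏ i ∈ Finset.Icc 3 (ℓ + 1), (s + i) ^ 2) * (s + (ℓ + 2)) ^ 2 := by
        rw [← Finset.prod_Icc_succ_top (by omega : 3 ≤ ℓ + 1 + 1)]
      set P := ∏ i ∈ Finset.Icc 3 (ℓ + 1), (s + i) ^ 2 with hP
      set F := Nat.factorial ℓ with hF
      set F2 := Nat.factorial (ℓ + 2) with hF2
      have hfac1 : Nat.factorial (ℓ + 1) = (ℓ + 1) * F := Nat.factorial_succ ℓ
      have hfac2 : Nat.factorial (ℓ + 1 + 2) = (ℓ + 3) * F2 := Nat.factorial_succ (ℓ + 2)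
      rw [hsplit, hfac1, hfac2]
      -- abbreviations
      set C := 2 * (s + 1) ^ 2 + ℓ + 2 with hC
      have hC' : 2 * (s + 1) ^ 2 + (ℓ + 1) + 2 = C + 1 := by omega
      rw [hC']
      set r := (s + 1) * (s + ℓ + 1) + 1 with hr
      have hr' : (s + 1) * (s + (ℓ + 1) + 1) + 1 = r + (s + 1) := by rw [hr]; ring
      rw [hr']
      set L := (s + ℓ + 2) * (s + 2) * P * C with hL
      have key := stmt_12_key s ℓ
      -- multiply both sides of goal by M := C * (s+ℓ+2)
      have hM : 0 < C * (s + ℓ + 2) := by positivity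
      refine Nat.lt_of_mul_lt_mul_right (a := C * (s + ℓ + 2)) ?_
      have e1 : (s + (ℓ+1) + 2) * (s + 2) * (P * (s + (ℓ+2))^2) * (C + 1) * (C * (s + ℓ + 2))
          = L * ((s + ℓ + 3) * (s + ℓ + 2) ^ 2 * (C + 1)) := by
        rw [hL]; ring
      have key2 : (ℓ+1) * (ℓ+3) * (r + (s+1)) * C ≤ r * (s + ℓ + 3) * (s + ℓ + 2) * (C + 1) := by
        have hrr : (s + 1) * (s + ℓ + 2) + 1 = r + (s + 1) := by rw [hr]; ring
        have hCC : 2*(s+1)^2 + ℓ + 3 = C + 1 := by omega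
        rw [hrr, hCC, hC] at key
        exact key
      calc Nat.factorial (ℓ+1) * ((ℓ+3) * F2) * (r + (s+1)) * (C * (s + ℓ + 2))
          = (F * F2 * (s + ℓ + 2)) * ((ℓ+1) * (ℓ+3) * (r + (s+1)) * C) := by
            rw [hfac1]; ring
        _ ≤ (F * F2 * (s + ℓ + 2)) * (r * (s + ℓ + 3) * (s + ℓ + 2) * (C + 1)) :=
            Nat.mul_le_mul_left _ key2
        _ = F * F2 * r * ((s + ℓ + 3) * (s + ℓ + 2) ^ 2 * (C + 1)) := by ring
        _ < L * ((s + ℓ + 3) * (s + ℓ + 2) ^ 2 * (C + 1)) :=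
            mul_lt_mul_of_pos_right ih (by positivity)
        _ = (s + (ℓ+1) + 2) * (s + 2) * (P * (s + (ℓ+2))^2) * (C + 1) * (C * (s + ℓ + 2)) := e1.symm
  -- done
end

section
/- Let t ≥ 2, ℓ ≥ 1 and s ≥ 0 be integers, and set α = ([∏_{j=0}^{ℓ−1} ∏_{i=1}^{s} (t+i+j)] · [∏_{i=0}^{ℓ−2} (t+i)] · [∏_{i=1}^{s} i!]) / ((ℓ−1)! · ∏_{i=ℓ+1}^{s+ℓ} i!) ∈ ℚ. Then α · [∏_{i=1}^{ℓ} (s+i)!] · [∏_{i=s+1}^{ℓ−1} (t+i)^{ℓ}] = ℓ · [∏_{i=1}^{ℓ−1} i!] · (t+ℓ−1)^{ℓ−1} · [∏_{i=0}^{ℓ−2} (t+i)^{i+1}·(t+s+1+i)^{ℓ−1−i}] · [∏_{i=ℓ}^{s} (t+i)^{ℓ}]. -/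
/-!
Clearing the denominator of `α` leaves two product identities. Both
`∏_{i ≤ s} i! · ∏_{i ≤ ℓ} (s+i)!` and `∏_{i < ℓ} i! · ℓ! · ∏_{ℓ < i ≤ s+ℓ} i!` equal
`∏_{i ≤ s+ℓ} i!`. For the linear factors, put `f m = t + m` and write every product as
`∏_{m < s+ℓ} f m ^ e m`; the exponents then agree pointwise. In the double product, `f m`
occurs once for each `j < ℓ` with `m - s ≤ j < m`, i.e. `min m ℓ - (m - s)` times.
-/

open Finset

section CommMonoid

variable {M : Type*} [CommMonoid M]

theorem prod_Ico_pow_eq_prod_range_pow_ite (f : ℕ → M) (c : ℕ → ℕ) {a b N : ℕ} (hb : b ≤ N) :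
    ∏ m ∈ Ico a b, f m ^ c m = ∏ m ∈ range N, f m ^ (if m ∈ Ico a b then c m else 0) := by
  simp_rw [pow_ite, pow_zero]
  rw [prod_ite_mem, inter_eq_right.mpr]
  intro m hm
  simp only [mem_Ico, mem_range] at hm ⊢
  omega

theorem card_range_filter_mem_Ico_add (ℓ s m : ℕ) :
    #{j ∈ range ℓ | m ∈ Ico (1 + j) (s + 1 + j)} = min m ℓ - (m - s) := by
  rw [← Nat.card_Ico]
  congr 1
  ext j
  simp only [mem_filter, mem_range, mem_Ico]
  omega

theorem prod_range_prod_Icc_eq_prod_range_pow (f : ℕ → M) (ℓ s : ℕ) :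
    ∏ j ∈ range ℓ, ∏ i ∈ Icc 1 s, f (i + j) =
      ∏ m ∈ range (s + ℓ), f m ^ (min m ℓ - (m - s)) := by
  calc ∏ j ∈ range ℓ, ∏ i ∈ Icc 1 s, f (i + j)
      = ∏ j ∈ range ℓ, ∏ m ∈ range (s + ℓ),
          f m ^ (if m ∈ Ico (1 + j) (s + 1 + j) then 1 else 0) := by
        refine prod_congr rfl fun j hj => ?_
        rw [← Ico_add_one_right_eq_Icc, prod_Ico_add', ← prod_Ico_pow_eq_prod_range_pow_ite]
        · simp only [pow_one]
        · simp only [mem_range] at hj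
          omega
    _ = ∏ m ∈ range (s + ℓ), f m ^ (min m ℓ - (m - s)) := by
        rw [prod_comm]
        refine prod_congr rfl fun m _ => ?_
        rw [prod_pow_eq_pow_sum, sum_boole, card_range_filter_mem_Ico_add, Nat.cast_id]

theorem prod_range_prod_Icc_add_mul_eq (f : ℕ → M) {ℓ : ℕ} (s : ℕ) (hℓ : 1 ≤ ℓ) :
    (∏ j ∈ range ℓ, ∏ i ∈ Icc 1 s, f (i + j)) * (∏ i ∈ range (ℓ - 1), f i) *
        ∏ i ∈ Icc (s + 1) (ℓ - 1), f i ^ ℓ =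
      f (ℓ - 1) ^ (ℓ - 1) *
        (∏ i ∈ range (ℓ - 1), f i ^ (i + 1) * f (s + 1 + i) ^ (ℓ - 1 - i)) *
        ∏ i ∈ Icc ℓ s, f i ^ ℓ := by
  have embed := fun a b c (hb : b ≤ s + ℓ) => prod_Ico_pow_eq_prod_range_pow_ite f c (a := a) hb
  have hB : ∏ i ∈ range (ℓ - 1), f i =
      ∏ m ∈ range (s + ℓ), f m ^ (if m ∈ Ico 0 (ℓ - 1) then 1 else 0) := by
    rw [← embed _ _ _ (by omega), ← range_eq_Ico]
    simp only [pow_one]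
  have hG : ∏ i ∈ Icc (s + 1) (ℓ - 1), f i ^ ℓ =
      ∏ m ∈ range (s + ℓ), f m ^ (if m ∈ Ico (s + 1) ℓ then ℓ else 0) := by
    rw [← embed _ _ (fun _ => ℓ) (by omega), ← Ico_add_one_right_eq_Icc, Nat.sub_add_cancel hℓ]
  have hH : f (ℓ - 1) ^ (ℓ - 1) =
      ∏ m ∈ range (s + ℓ), f m ^ (if m ∈ Ico (ℓ - 1) ℓ then ℓ - 1 else 0) := by
    rw [← embed _ _ (fun _ => ℓ - 1) (by omega), Nat.Ico_pred_singleton hℓ, prod_singleton]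
  have hQ₁ : ∏ i ∈ range (ℓ - 1), f i ^ (i + 1) =
      ∏ m ∈ range (s + ℓ), f m ^ (if m ∈ Ico 0 (ℓ - 1) then m + 1 else 0) := by
    rw [← embed _ _ _ (by omega), ← range_eq_Ico]
  have hQ₂ : ∏ i ∈ range (ℓ - 1), f (s + 1 + i) ^ (ℓ - 1 - i) =
      ∏ m ∈ range (s + ℓ), f m ^ (if m ∈ Ico (s + 1) (s + ℓ) then s + ℓ - m else 0) := by
    rw [← embed _ _ (fun m => s + ℓ - m) le_rfl, prod_Ico_eq_prod_range]
    refine prod_congr (by congr 1; omega) fun i _ => ?_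
    congr 1
    omega
  have hR : ∏ i ∈ Icc ℓ s, f i ^ ℓ =
      ∏ m ∈ range (s + ℓ), f m ^ (if m ∈ Ico ℓ (s + 1) then ℓ else 0) := by
    rw [← embed _ _ (fun _ => ℓ) (by omega), ← Ico_add_one_right_eq_Icc]
  rw [prod_range_prod_Icc_eq_prod_range_pow, prod_mul_distrib, hB, hG, hH, hQ₁, hQ₂, hR]
  simp only [← prod_mul_distrib, ← pow_add]
  refine prod_congr rfl fun m hm => ?_
  congr 1
  simp only [mem_range, mem_Ico] at hm ⊢
  split_ifs <;> omega

theorem prod_Icc_one_mul_prod_Icc_one_add_eq (g : ℕ → M) {s ℓ : ℕ} (hℓ : 1 ≤ ℓ) :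
    (∏ i ∈ Icc 1 s, g i) * ∏ i ∈ Icc 1 ℓ, g (s + i) =
      (∏ i ∈ Icc 1 (ℓ - 1), g i) * g ℓ * ∏ i ∈ Icc (ℓ + 1) (s + ℓ), g i := by
  obtain ⟨k, rfl⟩ : ∃ k, ℓ = k + 1 := ⟨ℓ - 1, by omega⟩
  simp only [← Ico_add_one_right_eq_Icc, add_tsub_cancel_right]
  rw [← prod_Ico_succ_top (by omega), prod_Ico_consecutive _ (by omega) (by omega)]
  simp_rw [add_comm s]
  rw [prod_Ico_add', prod_Ico_consecutive _ (by omega) (by omega), add_right_comm]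

end CommMonoid

theorem stmt_13_general (t ℓ s : ℕ) (hℓ : 1 ≤ ℓ)
    (α : ℚ)
    (hα : α = ((∏ j ∈ Finset.range ℓ, ∏ i ∈ Finset.Icc 1 s, ((t + i + j : ℕ) : ℚ)) *
        (∏ i ∈ Finset.range (ℓ - 1), ((t + i : ℕ) : ℚ)) *
        (∏ i ∈ Finset.Icc 1 s, (Nat.factorial i : ℚ))) /
      ((Nat.factorial (ℓ - 1) : ℚ) *
        ∏ i ∈ Finset.Icc (ℓ + 1) (s + ℓ), (Nat.factorial i : ℚ))) :
    α * (∏ i ∈ Finset.Icc 1 ℓ, (Nat.factorial (s + i) : ℚ)) *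
        (∏ i ∈ Finset.Icc (s + 1) (ℓ - 1), ((t + i : ℕ) : ℚ) ^ ℓ) =
      (ℓ : ℚ) * (∏ i ∈ Finset.Icc 1 (ℓ - 1), (Nat.factorial i : ℚ)) *
        ((t + ℓ - 1 : ℕ) : ℚ) ^ (ℓ - 1) *
        (∏ i ∈ Finset.range (ℓ - 1),
          ((t + i : ℕ) : ℚ) ^ (i + 1) * ((t + s + 1 + i : ℕ) : ℚ) ^ (ℓ - 1 - i)) *
        (∏ i ∈ Finset.Icc ℓ s, ((t + i : ℕ) : ℚ) ^ ℓ) := by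
  have hfactorials := prod_Icc_one_mul_prod_Icc_one_add_eq (fun i => (i.factorial : ℚ)) (s := s) hℓ
  rw [← Nat.mul_factorial_pred (by omega), Nat.cast_mul] at hfactorials
  have hlinear := prod_range_prod_Icc_add_mul_eq (fun m => ((t + m : ℕ) : ℚ)) s hℓ
  simp only [← add_assoc] at hlinear
  rw [hα, show t + ℓ - 1 = t + (ℓ - 1) by omega]
  field_simp
  linear_combination congrArg₂ (· * ·) hlinear hfactorials

/-- **Product evaluation of `α`.** Let `t ≥ 2`, `ℓ ≥ 1`, `s ≥ 0` and
`α = (∏_{j=0}^{ℓ−1} ∏_{i=1}^{s} (t+i+j) · ∏_{i=0}^{ℓ−2} (t+i) · ∏_{i=1}^{s} i!) /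
((ℓ−1)! · ∏_{i=ℓ+1}^{s+ℓ} i!) ∈ ℚ`.  Then
`α · ∏_{i=1}^{ℓ} (s+i)! · ∏_{i=s+1}^{ℓ−1} (t+i)^ℓ
  = ℓ · ∏_{i=1}^{ℓ−1} i! · (t+ℓ−1)^{ℓ−1} · ∏_{i=0}^{ℓ−2} (t+i)^{i+1}·(t+s+1+i)^{ℓ−1−i}
      · ∏_{i=ℓ}^{s} (t+i)^ℓ`. -/
theorem stmt_13 (t ℓ s : ℕ) (ht : 2 ≤ t) (hℓ : 1 ≤ ℓ)
    (α : ℚ)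
    (hα : α = ((∏ j ∈ Finset.range ℓ, ∏ i ∈ Finset.Icc 1 s, ((t + i + j : ℕ) : ℚ)) *
        (∏ i ∈ Finset.range (ℓ - 1), ((t + i : ℕ) : ℚ)) *
        (∏ i ∈ Finset.Icc 1 s, (Nat.factorial i : ℚ))) /
      ((Nat.factorial (ℓ - 1) : ℚ) *
        ∏ i ∈ Finset.Icc (ℓ + 1) (s + ℓ), (Nat.factorial i : ℚ))) :
    α * (∏ i ∈ Finset.Icc 1 ℓ, (Nat.factorial (s + i) : ℚ)) *
        (∏ i ∈ Finset.Icc (s + 1) (ℓ - 1), ((t + i : ℕ) : ℚ) ^ ℓ) =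
      (ℓ : ℚ) * (∏ i ∈ Finset.Icc 1 (ℓ - 1), (Nat.factorial i : ℚ)) *
        ((t + ℓ - 1 : ℕ) : ℚ) ^ (ℓ - 1) *
        (∏ i ∈ Finset.range (ℓ - 1),
          ((t + i : ℕ) : ℚ) ^ (i + 1) * ((t + s + 1 + i : ℕ) : ℚ) ^ (ℓ - 1 - i)) *
        (∏ i ∈ Finset.Icc ℓ s, ((t + i : ℕ) : ℚ) ^ ℓ) :=
  stmt_13_general t ℓ s hℓ α hα
end

section
/- Let t ≥ 1 and m ≥ n ≥ 1 be integers, and define the strictly decreasing integer sequence c₁ > c₂ > … > c_{n+t−1} by c_i = m+t−1−i for 1 ≤ i ≤ t−1 and c_i = n+t−1−i for t ≤ i ≤ n+t−1 (i.e. the sequence m+t−2, m+t−3, …, m, n−1, n−2, …, 1, 0). Then ∏_{1≤i<j≤n+t−1} (c_i − c_j) · [∏_{i=m−n}^{m−1} i!] = [∏_{j=0}^{m−n−1} ∏_{i=0}^{n−1} (t+i+j)] · [∏_{i=1}^{n−1} i!] · [∏_{i=1}^{n+t−2} i!]. -/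
open Finset Nat

/-!
Write `m = n + r` and `G x = ∏_{k<x} k!`. The differences `c i - c j` split into three blocks:
inside each of the two runs of consecutive integers they give `G (t - 1)` and `G n`, and across
the runs they are the entries `r + 1 + a + b` of a `(t - 1) × n` rectangle. A rectangle of
`p × q` cells with entries `s + 1 + a + b` has product `G (s + p + q) G s / (G (s + p) G (s + q))`
(row `a` contributes `(s + a + q)! / (s + a)!`), and the double product on the right-hand side
is the `r × n` rectangle with `s = t - 1`; the identity follows from the symmetry of this
formula in `s` and `p`.
-/

def vandermondeProd {R : Type*} [CommRing R] (c : ℕ → R) (a b : ℕ) : R :=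
  ∏ i ∈ Ico a b, ∏ j ∈ Ico (i + 1) b, (c i - c j)

section vandermondeProd

variable {R : Type*} [CommRing R] (c : ℕ → R)

theorem vandermondeProd_eq_mul {a k b : ℕ} (hak : a ≤ k) (hkb : k ≤ b) :
    vandermondeProd c a b =
      vandermondeProd c a k * vandermondeProd c k b *
        ∏ i ∈ Ico a k, ∏ j ∈ Ico k b, (c i - c j) := by
  have hinner : ∀ i ∈ Ico a k, ∏ j ∈ Ico (i + 1) b, (c i - c j) =
      (∏ j ∈ Ico (i + 1) k, (c i - c j)) * ∏ j ∈ Ico k b, (c i - c j) := fun i hi =>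
    (prod_Ico_consecutive _ (mem_Ico.1 hi).2 hkb).symm
  rw [vandermondeProd, vandermondeProd, vandermondeProd, ← prod_Ico_consecutive _ hak hkb,
    prod_congr rfl hinner, prod_mul_distrib]
  ring

theorem vandermondeProd_self_add_one (a : ℕ) : vandermondeProd c a (a + 1) = 1 := by
  simp [vandermondeProd]

theorem vandermondeProd_of_eq_sub (C : R) {a b : ℕ} (hc : ∀ i ∈ Ico a b, c i = C - i) :
    vandermondeProd c a b = ∏ k ∈ range (b - a), (k ! : R) := by
  rcases le_total b a with hba | hab
  · simp [vandermondeProd, Ico_eq_empty_of_le hba, Nat.sub_eq_zero_of_le hba]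
  obtain ⟨L, rfl⟩ := Nat.exists_eq_add_of_le hab
  clear hab
  rw [Nat.add_sub_cancel_left]
  induction L generalizing a with
  | zero => simp [vandermondeProd]
  | succ L ih =>
    have hc' : ∀ i ∈ Ico (a + 1) (a + 1 + L), c i = C - i := fun i hi =>
      hc i (Ico_subset_Ico_left a.le_succ (by rwa [add_right_comm] at hi))
    have hrow : ∏ j ∈ Ico (a + 1) (a + (L + 1)), (c a - c j) = (L ! : R) := by
      rw [prod_Ico_eq_prod_range, ← prod_range_add_one_eq_factorial, Nat.cast_prod]
      refine prod_congr (by congr 1; omega) fun k hk => ?_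
      rw [hc a (by simp), hc _ (by simp at hk ⊢; omega)]
      push_cast; ring
    rw [vandermondeProd_eq_mul c (Nat.le_add_right a 1) (by omega), vandermondeProd_self_add_one,
      one_mul, Ico_add_one_right_eq_Icc, Icc_self, prod_singleton, hrow, ← add_assoc,
      add_right_comm, ih hc', prod_range_succ]

end vandermondeProd

def boxProd (s p q : ℕ) : ℕ :=
  ∏ a ∈ range p, ∏ b ∈ range q, (s + a + 1 + b)

theorem boxProd_pred_eq {s : ℕ} (hs : 1 ≤ s) (p q : ℕ) :
    boxProd (s - 1) p q = ∏ a ∈ range p, ∏ b ∈ range q, (s + b + a) :=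
  prod_congr rfl fun _ _ => prod_congr rfl fun _ _ => by omega

theorem boxProd_mul_prod_range_factorial (s p q : ℕ) :
    boxProd s p q * (∏ k ∈ range (s + p), k !) * ∏ k ∈ range (s + q), k ! =
      (∏ k ∈ range (s + p + q), k !) * ∏ k ∈ range s, k ! := by
  induction p with
  | zero => simp [boxProd, mul_comm]
  | succ p ih =>
    have hrow : (∏ b ∈ range q, (s + p + 1 + b)) * (s + p)! = (s + p + q)! := by
      rw [← ascFactorial_eq_prod_range, mul_comm, factorial_mul_ascFactorial]
    calc boxProd s (p + 1) q * (∏ k ∈ range (s + (p + 1)), k !) * ∏ k ∈ range (s + q), k !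
        = (boxProd s p q * (∏ k ∈ range (s + p), k !) * ∏ k ∈ range (s + q), k !) *
            ((∏ b ∈ range q, (s + p + 1 + b)) * (s + p)!) := by
          rw [boxProd, ← add_assoc, prod_range_succ, prod_range_succ, ← boxProd]; ring
      _ = (∏ k ∈ range (s + (p + 1) + q), k !) * ∏ k ∈ range s, k ! := by
          rw [ih, hrow, show s + (p + 1) + q = s + p + q + 1 by ring, prod_range_succ]; ring

theorem prod_range_factorial_mul_boxProd_mul_prod_Ico (s p q : ℕ) :
    (∏ k ∈ range p, k !) * boxProd s p q * ∏ k ∈ Ico s (s + q), k ! =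
      boxProd p s q * ∏ k ∈ range (p + q), k ! := by
  have hpos : 0 < (∏ k ∈ range s, k !) * ∏ k ∈ range (s + p), k ! :=
    Nat.mul_pos (prod_pos fun k _ => factorial_pos k) (prod_pos fun k _ => factorial_pos k)
  refine Nat.eq_of_mul_eq_mul_right hpos ?_
  have h1 := boxProd_mul_prod_range_factorial s p q
  have h2 := boxProd_mul_prod_range_factorial p s q
  have h3 := prod_range_mul_prod_Ico (fun k => k !) (Nat.le_add_right s q)
  rw [add_comm p s] at h2
  calc (∏ k ∈ range p, k !) * boxProd s p q * (∏ k ∈ Ico s (s + q), k !) *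
        ((∏ k ∈ range s, k !) * ∏ k ∈ range (s + p), k !)
      = (∏ k ∈ range p, k !) * (boxProd s p q * (∏ k ∈ range (s + p), k !) *
          ((∏ k ∈ range s, k !) * ∏ k ∈ Ico s (s + q), k !)) := by ring
    _ = (∏ k ∈ range s, k !) *
        ((∏ k ∈ range (s + p + q), k !) * ∏ k ∈ range p, k !) := by
      rw [h3, h1]; ring
    _ = boxProd p s q * (∏ k ∈ range (p + q), k !) *
        ((∏ k ∈ range s, k !) * ∏ k ∈ range (s + p), k !) := by
      rw [← h2]; ring

theorem prod_Ico_prod_Ico_add_sub_eq_boxProd (r t n : ℕ) :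
    ∏ i ∈ Ico 1 t, ∏ j ∈ Ico t (t + n), ((r : ℤ) + j - i) = boxProd r (t - 1) n := by
  rw [boxProd, ← prod_range_reflect, Nat.cast_prod, prod_Ico_eq_prod_range]
  refine prod_congr rfl fun a ha => ?_
  rw [prod_Ico_eq_prod_range, Nat.add_sub_cancel_left, Nat.cast_prod]
  refine prod_congr rfl fun b _ => ?_
  have ha : 2 + a ≤ t := by simp at ha; omega
  push_cast [Nat.sub_sub, Nat.cast_sub ha]
  ring

theorem prod_Icc_one_factorial_eq_prod_range {x : ℕ} (hx : 1 ≤ x) :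
    ∏ k ∈ Icc 1 (x - 1), k ! = ∏ k ∈ range x, k ! := by
  rw [prod_Icc_factorial, ← prod_range_succ_factorial, Nat.sub_add_cancel hx]

/-- **Proposition 4.3 (rank of `C_{mn}`).** Let `t ≥ 1`, `m ≥ n ≥ 1` and let
`c_i = m+t−1−i` for `1 ≤ i ≤ t−1`, `c_i = n+t−1−i` for `t ≤ i ≤ n+t−1`.  Then
`∏_{1≤i<j≤n+t−1} (c_i − c_j) · ∏_{i=m−n}^{m−1} i!
  = ∏_{j=0}^{m−n−1} ∏_{i=0}^{n−1} (t+i+j) · ∏_{i=1}^{n−1} i! · ∏_{i=1}^{n+t−2} i!`. -/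
theorem stmt_14 (t m n : ℕ) (ht : 1 ≤ t) (hn : 1 ≤ n) (hnm : n ≤ m)
    (c : ℕ → ℤ)
    (hc : ∀ i, c i = if i < t then (m : ℤ) + (t : ℤ) - 1 - (i : ℤ)
                     else (n : ℤ) + (t : ℤ) - 1 - (i : ℤ)) :
    (∏ i ∈ Finset.Icc 1 (n + t - 1), ∏ j ∈ Finset.Icc (i + 1) (n + t - 1), (c i - c j)) *
        (∏ i ∈ Finset.Icc (m - n) (m - 1), (Nat.factorial i : ℤ)) =
      (∏ j ∈ Finset.range (m - n), ∏ i ∈ Finset.range n, ((t + i + j : ℕ) : ℤ)) *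
        (∏ i ∈ Finset.Icc 1 (n - 1), (Nat.factorial i : ℤ)) *
        (∏ i ∈ Finset.Icc 1 (n + t - 2), (Nat.factorial i : ℤ)) := by
  obtain ⟨r, rfl⟩ := Nat.exists_eq_add_of_le hnm
  have hIcc : ∀ a b, 1 ≤ b → Icc a (b - 1) = Ico a b := fun a b hb => by
    rw [← Ico_add_one_right_eq_Icc, Nat.sub_add_cancel hb]
  have hV : ∏ i ∈ Icc 1 (n + t - 1), ∏ j ∈ Icc (i + 1) (n + t - 1), (c i - c j) =
      vandermondeProd c 1 (n + t) := by
    simp_rw [hIcc _ (n + t) (by omega)]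
    rfl
  have hfirst : vandermondeProd c 1 t = ∏ k ∈ range (t - 1), (k ! : ℤ) :=
    vandermondeProd_of_eq_sub c _ fun i hi => by rw [hc, if_pos (mem_Ico.1 hi).2]
  have hsecond : vandermondeProd c t (n + t) = ∏ k ∈ range n, (k ! : ℤ) := by
    rw [vandermondeProd_of_eq_sub c _ fun i hi => by rw [hc, if_neg (mem_Ico.1 hi).1.not_gt],
      Nat.add_sub_cancel]
  have hcross : ∏ i ∈ Ico 1 t, ∏ j ∈ Ico t (n + t), (c i - c j) = boxProd r (t - 1) n := by
    rw [add_comm n t, ← prod_Ico_prod_Ico_add_sub_eq_boxProd]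
    refine prod_congr rfl fun i hi => prod_congr rfl fun j hj => ?_
    rw [hc, hc, if_pos (mem_Ico.1 hi).2, if_neg (mem_Ico.1 hj).1.not_gt]
    push_cast; ring
  have hnat : (∏ k ∈ range (t - 1), k !) * (∏ k ∈ range n, k !) * boxProd r (t - 1) n *
      ∏ k ∈ Ico r (r + n), k ! =
      (∏ j ∈ range r, ∏ i ∈ range n, (t + i + j)) * (∏ k ∈ Icc 1 (n - 1), k !) *
        ∏ k ∈ Icc 1 (n + t - 2), k ! := by
    rw [← boxProd_pred_eq ht, prod_Icc_one_factorial_eq_prod_range hn,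
      show n + t - 2 = t - 1 + n - 1 by omega,
      prod_Icc_one_factorial_eq_prod_range (by omega)]
    linear_combination
      (∏ k ∈ range n, k !) * prod_range_factorial_mul_boxProd_mul_prod_Ico r (t - 1) n
  rw [hV, vandermondeProd_eq_mul c ht (Nat.le_add_left t n), hfirst, hsecond, hcross,
    Nat.add_sub_cancel_left, hIcc r (n + r) (by omega), add_comm n r]
  exact_mod_cast hnat
end

section
/- Let t ≥ 1 and m > n ≥ 1 be integers, and define the strictly decreasing integer sequence c₁ > c₂ > … > c_{n+t−1} by c_i = m+t−1−i for 1 ≤ i ≤ t−1, c_t = n, and c_i = n+t−1−i for t+1 ≤ i ≤ n+t−1 (i.e. the sequence m+t−2, m+t−3, …, m, n, n−2, n−3, …, 1, 0). Then (t+m−1) · [∏_{1≤i<j≤n+t−1} (c_i − c_j)] · (m−n−1)! · [∏_{i=m−n+1}^{m−1} i!] = [∏_{j=0}^{m−n−1} ∏_{i=1}^{n−1} (t+i+j)] · [∏_{i=0}^{m−n−2} (t+i)] · (t+m−1) · [∏_{i=1}^{n−2} i!] · n! · [∏_{i=1}^{n+t−2} i!]. -/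
open Finset

lemma prodIocRange (f : ℕ → ℤ) (a N : ℕ) :
    ∏ i ∈ Ioc a (a + N), f i = ∏ k ∈ range N, f (a + 1 + k) := by
  induction N with
  | zero => simp
  | succ N ih =>
      rw [show a + (N+1) = (a+N)+1 by omega, prod_Ioc_succ_top (by omega), ih,
        prod_range_succ]
      congr 2
      omega

lemma prodIocRange' (f : ℕ → ℤ) {a b : ℕ} (h : a ≤ b) :
    ∏ i ∈ Ioc a b, f i = ∏ k ∈ range (b - a), f (a + 1 + k) := by
  have := prodIocRange f a (b - a)
  rwa [show a + (b - a) = b by omega] at this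

lemma facAsc (a b : ℕ) :
    (a.factorial : ℤ) * ∏ k ∈ range b, ((a:ℤ) + 1 + k) = ((a + b).factorial : ℤ) := by
  induction b with
  | zero => simp
  | succ b ih =>
      rw [prod_range_succ, ← mul_assoc, ih, show a + (b+1) = (a+b)+1 by omega,
        Nat.factorial_succ]
      push_cast
      ring

lemma facDesc (a b : ℕ) :
    (a.factorial : ℤ) * ∏ k ∈ range b, ((a:ℤ) + b - k) = ((a + b).factorial : ℤ) := by
  induction b with
  | zero => simp
  | succ b ih =>
      rw [prod_range_succ']
      have h1 : ∏ k ∈ range b, ((a:ℤ) + ↑(b+1) - ↑(k+1)) = ∏ k ∈ range b, ((a:ℤ) + b - k) := by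
        refine prod_congr rfl fun k _ => ?_
        push_cast; ring
      rw [h1, show ((a:ℤ) + ↑(b+1) - ↑(0:ℕ)) = ((a:ℤ)+b+1) by push_cast; ring,
        show a + (b+1) = (a+b)+1 by omega, Nat.factorial_succ]
      push_cast
      nlinarith [ih]

lemma dfac (N : ℕ) : ∏ k ∈ range N, ((N:ℤ) - k) = (N.factorial : ℤ) := by
  have := facDesc 0 N
  simpa using this

lemma vand (a N : ℕ) :
    ∏ i ∈ Ioc a (a + N), ∏ j ∈ Ioc i (a + N), ((j:ℤ) - (i:ℤ))
      = ∏ k ∈ range N, (k.factorial : ℤ) := by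
  induction N with
  | zero => simp
  | succ N ih =>
      rw [show a + (N+1) = (a+N)+1 by omega, prod_Ioc_succ_top (by omega)]
      have h0 : ∏ j ∈ Ioc ((a+N)+1) ((a+N)+1), ((j:ℤ) - ((a+N)+1 : ℕ)) = 1 := by simp
      rw [h0, mul_one]
      have h1 : ∀ i ∈ Ioc a (a+N),
          ∏ j ∈ Ioc i ((a+N)+1), ((j:ℤ) - i)
            = (∏ j ∈ Ioc i (a+N), ((j:ℤ) - i)) * ((((a+N)+1 : ℕ) : ℤ) - i) := by
        intro i hi
        exact prod_Ioc_succ_top (mem_Ioc.mp hi).2 _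
      rw [prod_congr rfl h1, prod_mul_distrib, ih]
      have h2 : ∏ i ∈ Ioc a (a + N), ((((a+N)+1 : ℕ) : ℤ) - i)
          = (N.factorial : ℤ) := by
        rw [prodIocRange (fun i => (((a+N)+1 : ℕ) : ℤ) - i) a N]
        have h3 : ∏ k ∈ range N, ((((a+N)+1 : ℕ) : ℤ) - ↑(a+1+k))
            = ∏ k ∈ range N, ((N:ℤ) - k) := by
          refine prod_congr rfl fun k _ => ?_
          push_cast; ring
        rw [h3, dfac]
      rw [h2, prod_range_succ]

lemma vand' {a b : ℕ} (h : a ≤ b) :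
    ∏ i ∈ Ioc a b, ∏ j ∈ Ioc i b, ((j:ℤ) - (i:ℤ))
      = ∏ k ∈ range (b - a), (k.factorial : ℤ) := by
  have := vand a (b - a)
  rwa [show a + (b - a) = b by omega] at this

/-- **Proposition 4.4 (rank of `C_{mn−1}`).** Let `t ≥ 1`, `m > n ≥ 1` and let
`c_i = m+t−1−i` for `1 ≤ i ≤ t−1`, `c_t = n`, `c_i = n+t−1−i` for `t+1 ≤ i ≤ n+t−1`.
Then
`(t+m−1) · ∏_{1≤i<j≤n+t−1} (c_i − c_j) · (m−n−1)! · ∏_{i=m−n+1}^{m−1} i!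
  = ∏_{j=0}^{m−n−1} ∏_{i=1}^{n−1} (t+i+j) · ∏_{i=0}^{m−n−2} (t+i) · (t+m−1)
      · ∏_{i=1}^{n−2} i! · n! · ∏_{i=1}^{n+t−2} i!`. -/
theorem stmt_15 (t m n : ℕ) (ht : 1 ≤ t) (hn : 1 ≤ n) (hnm : n < m)
    (c : ℕ → ℤ)
    (hc : ∀ i, c i = if i < t then (m : ℤ) + (t : ℤ) - 1 - (i : ℤ)
                     else if i = t then (n : ℤ)
                     else (n : ℤ) + (t : ℤ) - 1 - (i : ℤ)) :
    ((t : ℤ) + (m : ℤ) - 1) *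
        (∏ i ∈ Finset.Icc 1 (n + t - 1), ∏ j ∈ Finset.Icc (i + 1) (n + t - 1), (c i - c j)) *
        (Nat.factorial (m - n - 1) : ℤ) *
        (∏ i ∈ Finset.Icc (m - n + 1) (m - 1), (Nat.factorial i : ℤ)) =
      (∏ j ∈ Finset.range (m - n), ∏ i ∈ Finset.Icc 1 (n - 1), ((t + i + j : ℕ) : ℤ)) *
        (∏ i ∈ Finset.range (m - n - 1), ((t + i : ℕ) : ℤ)) *
        ((t : ℤ) + (m : ℤ) - 1) *
        (∏ i ∈ Finset.Icc 1 (n - 2), (Nat.factorial i : ℤ)) *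
        (Nat.factorial n : ℤ) *
        (∏ i ∈ Finset.Icc 1 (n + t - 2), (Nat.factorial i : ℤ)) := by
  obtain ⟨d, hd1, hmd⟩ : ∃ d, 1 ≤ d ∧ m = n + d := ⟨m - n, by omega, by omega⟩
  have hcLow : ∀ i, i < t → c i = (m:ℤ) + t - 1 - i := fun i h => by rw [hc i, if_pos h]
  have hcT : c t = (n:ℤ) := by rw [hc t]; simp
  have hcHigh : ∀ i, t < i → c i = (n:ℤ) + t - 1 - i := fun i h => by
    rw [hc i, if_neg (by omega), if_neg (by omega)]
  -- Block 1 : rows 1..t-1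
  have hB1 : ∏ i ∈ Ioc 0 (t-1), ∏ j ∈ Ioc i (t+(n-1)), (c i - c j)
      = (∏ k ∈ range (t-1), (Nat.factorial k : ℤ))
        * ((∏ k ∈ range (t-1), ((d:ℤ) + (t:ℤ) - 2 - (k:ℤ)))
          * (∏ l ∈ range (n-1), ∏ k ∈ range (t-1), ((d:ℤ) + (t:ℤ) + (l:ℤ) - (k:ℤ)))) := by
    have step1 : ∀ i ∈ Ioc 0 (t-1),
        ∏ j ∈ Ioc i (t+(n-1)), (c i - c j)
          = (∏ j ∈ Ioc i (t-1), ((j:ℤ) - (i:ℤ)))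
            * ((((m:ℤ) + t - 1 - i) - n)
              * ∏ l ∈ range (n-1), ((d:ℤ) + (t:ℤ) + 1 + (l:ℤ) - (i:ℤ))) := by
      intro i hi
      obtain ⟨hi1, hi2⟩ := mem_Ioc.mp hi
      rw [← prod_Ioc_consecutive _ (show i ≤ t-1 by omega) (show t-1 ≤ t+(n-1) by omega),
          ← prod_Ioc_consecutive _ (show t-1 ≤ t by omega) (show t ≤ t+(n-1) by omega),
          show Ioc (t-1) t = {t} by ext x; simp; omega, prod_singleton]
      congr 1
      · refine prod_congr rfl fun j hj => ?_
        obtain ⟨hj1, hj2⟩ := mem_Ioc.mp hj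
        rw [hcLow i (by omega), hcLow j (by omega)]
        ring
      congr 1
      · rw [hcLow i (by omega), hcT]
      · rw [prodIocRange' (fun j => c i - c j) (show t ≤ t+(n-1) by omega),
          show t+(n-1)-t = n-1 by omega]
        refine prod_congr rfl fun l hl => ?_
        have hln := mem_range.mp hl
        rw [hcLow i (by omega), hcHigh (t+1+l) (by omega)]
        push_cast
        omega
    rw [prod_congr rfl step1, prod_mul_distrib, prod_mul_distrib]
    congr 1
    · simpa using vand' (show (0:ℕ) ≤ t-1 by omega)
    congr 1
    · rw [prodIocRange' _ (show (0:ℕ) ≤ t-1 by omega), Nat.sub_zero]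
      refine prod_congr rfl fun k hk => ?_
      push_cast
      omega
    · rw [prodIocRange' _ (show (0:ℕ) ≤ t-1 by omega), Nat.sub_zero, Finset.prod_comm]
      refine prod_congr rfl fun l _ => prod_congr rfl fun k _ => ?_
      push_cast
      ring
  -- Block 2 : row t
  have hB2 : ∏ j ∈ Ioc t (t+(n-1)), (c t - c j) = ∏ l ∈ range (n-1), ((l:ℤ) + 2) := by
    rw [prodIocRange' _ (show t ≤ t+(n-1) by omega), show t+(n-1)-t = n-1 by omega]
    refine prod_congr rfl fun l hl => ?_
    rw [hcT, hcHigh (t+1+l) (by omega)]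
    push_cast
    ring
  -- Block 3 : rows t+1 .. t+n-1
  have hB3 : ∏ i ∈ Ioc t (t+(n-1)), ∏ j ∈ Ioc i (t+(n-1)), (c i - c j)
      = ∏ k ∈ range (n-1), (Nat.factorial k : ℤ) := by
    have step : ∀ i ∈ Ioc t (t+(n-1)),
        ∏ j ∈ Ioc i (t+(n-1)), (c i - c j) = ∏ j ∈ Ioc i (t+(n-1)), ((j:ℤ) - (i:ℤ)) := by
      intro i hi
      obtain ⟨hi1, hi2⟩ := mem_Ioc.mp hi
      refine prod_congr rfl fun j hj => ?_
      obtain ⟨hj1, hj2⟩ := mem_Ioc.mp hj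
      rw [hcHigh i hi1, hcHigh j (by omega)]
      ring
    rw [prod_congr rfl step]
    have := vand' (show t ≤ t+(n-1) by omega)
    rwa [show t+(n-1)-t = n-1 by omega] at this
  -- main decomposition
  have hQ : (∏ i ∈ Finset.Icc 1 (n + t - 1), ∏ j ∈ Finset.Icc (i + 1) (n + t - 1), (c i - c j))
      = ((∏ k ∈ range (t-1), (Nat.factorial k : ℤ))
        * ((∏ k ∈ range (t-1), ((d:ℤ) + (t:ℤ) - 2 - (k:ℤ)))
          * (∏ l ∈ range (n-1), ∏ k ∈ range (t-1), ((d:ℤ) + (t:ℤ) + (l:ℤ) - (k:ℤ)))))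
        * ((∏ l ∈ range (n-1), ((l:ℤ) + 2))
          * (∏ k ∈ range (n-1), (Nat.factorial k : ℤ))) := by
    calc ∏ i ∈ Finset.Icc 1 (n + t - 1), ∏ j ∈ Finset.Icc (i + 1) (n + t - 1), (c i - c j)
        = ∏ i ∈ Ioc 0 (t+(n-1)), ∏ j ∈ Ioc i (t+(n-1)), (c i - c j) := by
          rw [show Finset.Icc 1 (n + t - 1) = Ioc 0 (t+(n-1)) by ext x; simp; omega]
          exact prod_congr rfl fun i _ => by
            rw [show Finset.Icc (i+1) (n + t - 1) = Ioc i (t+(n-1)) by ext x; simp; omega]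
      _ = (∏ i ∈ Ioc 0 (t-1), ∏ j ∈ Ioc i (t+(n-1)), (c i - c j))
          * ((∏ j ∈ Ioc t (t+(n-1)), (c t - c j))
            * ∏ i ∈ Ioc t (t+(n-1)), ∏ j ∈ Ioc i (t+(n-1)), (c i - c j)) := by
          rw [← prod_Ioc_consecutive _ (show (0:ℕ) ≤ t-1 by omega) (show t-1 ≤ t+(n-1) by omega),
            ← prod_Ioc_consecutive _ (show t-1 ≤ t by omega) (show t ≤ t+(n-1) by omega),
            show Ioc (t-1) t = {t} by ext x; simp; omega, prod_singleton]
      _ = _ := by rw [hB1, hB2, hB3]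
  rw [hQ]
  rw [show m - n - 1 = d - 1 by omega]
  -- last factorial product on LHS
  have hF1 : ∏ i ∈ Finset.Icc (m - n + 1) (m - 1), (Nat.factorial i : ℤ)
      = ∏ l ∈ range (n-1), ((d+1+l).factorial : ℤ) := by
    rw [show Finset.Icc (m - n + 1) (m - 1) = Ioc d (d+(n-1)) by ext x; simp; omega,
      prodIocRange (fun i => (Nat.factorial i : ℤ))]
  rw [hF1]
  -- X
  have hX : (∏ j ∈ Finset.range (m - n), ∏ i ∈ Finset.Icc 1 (n - 1), ((t + i + j : ℕ) : ℤ))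
      = ∏ i ∈ range (n-1), ∏ j ∈ range d, ((t:ℤ) + 1 + (i:ℤ) + (j:ℤ)) := by
    rw [show m - n = d by omega]
    have step : ∀ j ∈ range d, ∏ i ∈ Finset.Icc 1 (n - 1), ((t + i + j : ℕ) : ℤ)
        = ∏ i ∈ range (n-1), ((t:ℤ) + 1 + (i:ℤ) + (j:ℤ)) := by
      intro j _
      rw [show Finset.Icc 1 (n-1) = Ioc 0 (n-1) by ext x; simp; omega,
        prodIocRange' _ (show (0:ℕ) ≤ n-1 by omega), Nat.sub_zero]
      refine prod_congr rfl fun i _ => ?_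
      push_cast
      ring
    rw [prod_congr rfl step, Finset.prod_comm]
  rw [hX]
  -- Y
  have hY : (∏ i ∈ Finset.range (d - 1), ((t + i : ℕ) : ℤ))
      = ∏ i ∈ range (d-1), ((t:ℤ) + (i:ℤ)) :=
    prod_congr rfl fun i _ => by push_cast; ring
  rw [hY]
  -- superfactorial pieces on RHS
  have hPn2 : ∏ i ∈ Finset.Icc 1 (n-2), (Nat.factorial i : ℤ)
      = ∏ k ∈ range (n-1), (Nat.factorial k : ℤ) := by
    rcases Nat.lt_or_ge n 2 with h2 | h2
    · rw [show n-2 = 0 by omega, show n-1 = 0 by omega]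
      simp
    · rw [show Finset.Icc 1 (n-2) = Ioc 0 (n-2) by ext x; simp; omega,
        prodIocRange' _ (show (0:ℕ) ≤ n-2 by omega), Nat.sub_zero,
        show n-1 = (n-2)+1 by omega,
        prod_range_succ' (fun k => (Nat.factorial k : ℤ)) (n-2)]
      simp only [Nat.factorial_zero, Nat.cast_one, mul_one]
      exact prod_congr rfl fun k _ => by rw [show 0+1+k = k+1 by omega]
  rw [hPn2]
  have hPnt2 : ∏ i ∈ Finset.Icc 1 (n+t-2), (Nat.factorial i : ℤ)
      = (∏ k ∈ range (t-1), (Nat.factorial (k+1) : ℤ))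
        * (∏ l ∈ range (n-1), (Nat.factorial (t+l) : ℤ)) := by
    rw [show Finset.Icc 1 (n+t-2) = Ioc 0 ((t-1)+(n-1)) by ext x; simp; omega,
      prodIocRange' _ (show (0:ℕ) ≤ (t-1)+(n-1) by omega), Nat.sub_zero,
      prod_range_add]
    congr 1
    · exact prod_congr rfl fun k _ => by rw [show 0+1+k = k+1 by omega]
    · exact prod_congr rfl fun l _ => by rw [show 0+1+(t-1+l) = t+l by omega]
  rw [hPnt2]
  have hq : ∏ k ∈ range (t-1), (Nat.factorial (k+1) : ℤ)
      = (∏ k ∈ range (t-1), (Nat.factorial k : ℤ)) * ((t-1).factorial : ℤ) := by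
    have h1 := prod_range_succ (fun k => (Nat.factorial k : ℤ)) (t-1)
    have h2 := prod_range_succ' (fun k => (Nat.factorial k : ℤ)) (t-1)
    rw [h1] at h2
    simp only [Nat.factorial_zero, Nat.cast_one, mul_one] at h2
    exact h2.symm
  rw [hq]
  -- closed-form identities
  have i1 : (Nat.factorial (d-1) : ℤ) * (∏ k ∈ range (t-1), ((d:ℤ) + (t:ℤ) - 2 - (k:ℤ)))
      = ((d+t-2).factorial : ℤ) := by
    have h := facDesc (d-1) (t-1)
    rw [show (d-1)+(t-1) = d+t-2 by omega] at h
    rw [← h]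
    congr 1
    exact prod_congr rfl fun k _ => by omega
  have i2 : (∏ l ∈ range (n-1), ((d+1+l).factorial : ℤ))
      * (∏ l ∈ range (n-1), ∏ k ∈ range (t-1), ((d:ℤ) + (t:ℤ) + (l:ℤ) - (k:ℤ)))
      = ∏ l ∈ range (n-1), ((d+t+l).factorial : ℤ) := by
    rw [← prod_mul_distrib]
    refine prod_congr rfl fun l _ => ?_
    have h := facDesc (d+1+l) (t-1)
    rw [show (d+1+l)+(t-1) = d+t+l by omega] at h
    rw [← h]
    congr 1
    exact prod_congr rfl fun k _ => by omega
  have i3 : ∏ l ∈ range (n-1), ((l:ℤ) + 2) = (Nat.factorial n : ℤ) := by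
    have h := facAsc 1 (n-1)
    rw [show 1+(n-1) = n by omega] at h
    rw [← h]
    simp only [Nat.factorial_one, Nat.cast_one, one_mul]
    exact prod_congr rfl fun l _ => by push_cast; ring
  have i4 : (∏ i ∈ range (n-1), ∏ j ∈ range d, ((t:ℤ) + 1 + (i:ℤ) + (j:ℤ)))
      * (∏ l ∈ range (n-1), (Nat.factorial (t+l) : ℤ))
      = ∏ l ∈ range (n-1), ((d+t+l).factorial : ℤ) := by
    rw [← prod_mul_distrib]
    refine prod_congr rfl fun i _ => ?_
    have h := facAsc (t+i) d
    rw [show (t+i)+d = d+t+i by omega] at h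
    rw [← h, mul_comm]
    congr 1
    exact prod_congr rfl fun j _ => by push_cast; ring
  have i5 : ((t-1).factorial : ℤ) * (∏ i ∈ range (d-1), ((t:ℤ) + (i:ℤ)))
      = ((d+t-2).factorial : ℤ) := by
    have h := facAsc (t-1) (d-1)
    rw [show (t-1)+(d-1) = d+t-2 by omega] at h
    rw [← h]
    congr 1
    exact prod_congr rfl fun i _ => by omega
  rw [i3]
  linear_combination
    (((t:ℤ) + (m:ℤ) - 1) * (∏ k ∈ range (t-1), (Nat.factorial k : ℤ))
      * (Nat.factorial n : ℤ) * (∏ k ∈ range (n-1), (Nat.factorial k : ℤ)))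
    * ((∏ l ∈ range (n-1), ((d+1+l).factorial : ℤ))
        * (∏ l ∈ range (n-1), ∏ k ∈ range (t-1), ((d:ℤ) + (t:ℤ) + (l:ℤ) - (k:ℤ)))) * i1
    + (((t:ℤ) + (m:ℤ) - 1) * (∏ k ∈ range (t-1), (Nat.factorial k : ℤ))
      * (Nat.factorial n : ℤ) * (∏ k ∈ range (n-1), (Nat.factorial k : ℤ)))
      * ((d+t-2).factorial : ℤ) * i2
    - (((t:ℤ) + (m:ℤ) - 1) * (∏ k ∈ range (t-1), (Nat.factorial k : ℤ))
      * (Nat.factorial n : ℤ) * (∏ k ∈ range (n-1), (Nat.factorial k : ℤ)))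
      * (((t-1).factorial : ℤ) * (∏ i ∈ range (d-1), ((t:ℤ) + (i:ℤ)))) * i4
    - (((t:ℤ) + (m:ℤ) - 1) * (∏ k ∈ range (t-1), (Nat.factorial k : ℤ))
      * (Nat.factorial n : ℤ) * (∏ k ∈ range (n-1), (Nat.factorial k : ℤ)))
      * (∏ l ∈ range (n-1), ((d+t+l).factorial : ℤ)) * i5
end
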